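/- The set of possible arrival times generated by BFS expansion of an RDD is finite: given a finite graph G = (V,E) with positive edge durations δ : E → ℝ_{>0}, a finite set W ⊆ ℝ of permitted wait-until times, a start vertex s, and a bound μ_max, the set of reachable time-stamped nodes {(v,t) : t ≤ μ_max} generated by the rules (s,0) is reachable; if (u,t) is reachable and {u,v} ∈ E and t + δ(u,v) ≤ μ_max then (v, t + δ(u,v)) is reachable; if (u,t) is reachable and τ ∈ W with t < τ ≤ μ_max then (u,τ) is reachable — is finite. -/

import Mathlib

/-!
Let `c > 0` bound the edge durations from below. Every reachable time has the form
`a + d₁ + ⋯ + d_k` with `a ∈ {0} ∪ W` (the last wait, or the start) and edge durations `dᵢ`,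
and it is then at least `k * c`. Reachable times are at most `max 0 μmax`, so `k ≤ max 0 μmax / c`,
and there are only finitely many such sums.
-/

/-- Reachability of time-stamped nodes in the RDD built by BFS expansion. -/
inductive RDDReach {V : Type*} (E : V → V → Prop) (δ : V → V → ℝ) (W : Set ℝ)
    (s : V) (μmax : ℝ) : V → ℝ → Prop
  | start : RDDReach E δ W s μmax s 0
  | move : ∀ u v t, RDDReach E δ W s μmax u t → E u v → t + δ u v ≤ μmax →
      RDDReach E δ W s μmax v (t + δ u v)
  | wait : ∀ u t τ, RDDReach E δ W s μmax u t → τ ∈ W → t < τ → τ ≤ μmax →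
      RDDReach E δ W s μmax u τ

open scoped Pointwise

theorem Set.Finite.exists_lt_forall_le {α : Type*} [LinearOrder α] [NoMaxOrder α] {a : α}
    {s : Set α} (hs : s.Finite) (hlt : ∀ x ∈ s, a < x) : ∃ c, a < c ∧ ∀ x ∈ s, c ≤ x := by
  rcases s.eq_empty_or_nonempty with rfl | hne
  · obtain ⟨c, hc⟩ := exists_gt a
    exact ⟨c, hc, by simp⟩
  · obtain ⟨m, hm, hmin⟩ := Set.exists_min_image s id hs hne
    exact ⟨m, hlt m hm, hmin⟩

theorem Set.Finite.iterate_add {α : Type*} [Add α] {A D : Set α} (hA : A.Finite)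
    (hD : D.Finite) (k : ℕ) : ((· + D)^[k] A).Finite := by
  induction k with
  | zero => exact hA
  | succ k ih =>
    rw [Function.iterate_succ_apply']
    exact ih.add hD

theorem Set.add_mem_iterate_add {α : Type*} [Add α] {A D : Set α} {k : ℕ} {t d : α}
    (ht : t ∈ (· + D)^[k] A) (hd : d ∈ D) : t + d ∈ (· + D)^[k + 1] A := by
  rw [Function.iterate_succ_apply']
  exact Set.add_mem_add ht hd

section

variable {V : Type*} (E : V → V → Prop) (δ : V → V → ℝ)

def edgeDurations : Set ℝ := {d | ∃ u v, E u v ∧ δ u v = d}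

theorem finite_edgeDurations [Finite V] : (edgeDurations E δ).Finite :=
  (Set.finite_range fun p : V × V => δ p.1 p.2).subset fun _ ⟨u, v, _, hd⟩ => ⟨(u, v), hd⟩

end

namespace RDDReach

variable {V : Type*} {E : V → V → Prop} {δ : V → V → ℝ} {W : Set ℝ} {s : V} {μmax : ℝ}
  {v : V} {t : ℝ}

theorem le_max (h : RDDReach E δ W s μmax v t) : t ≤ max 0 μmax := by
  cases h with
  | start => exact le_max_left _ _
  | move _ _ _ _ _ hle => exact hle.trans (le_max_right _ _)
  | wait _ _ _ _ _ _ hle => exact hle.trans (le_max_right _ _)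

theorem exists_iterate_add {c : ℝ} (hc0 : 0 ≤ c) (hc : ∀ u v, E u v → c ≤ δ u v)
    (h : RDDReach E δ W s μmax v t) :
    ∃ k : ℕ, t ∈ (· + edgeDurations E δ)^[k] (insert 0 W) ∧ k * c ≤ t := by
  induction h with
  | start => exact ⟨0, Set.mem_insert 0 W, by simp⟩
  | move u v t _ huv _ ih =>
    obtain ⟨k, hk, hkc⟩ := ih
    refine ⟨k + 1, Set.add_mem_iterate_add hk ⟨u, v, huv, rfl⟩, ?_⟩
    push_cast
    linarith [hc u v huv]
  | wait u t τ _ hτ htτ _ ih =>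
    obtain ⟨k, _, hkc⟩ := ih
    refine ⟨0, Set.mem_insert_of_mem 0 hτ, ?_⟩
    rw [Nat.cast_zero, zero_mul]
    linarith [mul_nonneg k.cast_nonneg hc0]

end RDDReach

theorem rdd_reachable_finite
    {V : Type*} [Finite V] (E : V → V → Prop) (δ : V → V → ℝ) (W : Set ℝ)
    (s : V) (μmax : ℝ)
    (hδ : ∀ u v, E u v → 0 < δ u v) (hW : W.Finite) :
    {p : V × ℝ | RDDReach E δ W s μmax p.1 p.2}.Finite := by
  obtain ⟨c, hc0, hc⟩ := (finite_edgeDurations E δ).exists_lt_forall_le (a := 0)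
    (by rintro _ ⟨u, v, huv, rfl⟩; exact hδ u v huv)
  set N := ⌊max 0 μmax / c⌋₊
  have hfin : (⋃ k ∈ {k | k ≤ N}, (· + edgeDurations E δ)^[k] (insert 0 W)).Finite :=
    (Set.finite_le_nat N).biUnion fun k _ =>
      (hW.insert 0).iterate_add (finite_edgeDurations E δ) k
  refine (Set.finite_univ.prod hfin).subset ?_
  rintro ⟨v, t⟩ hvt
  obtain ⟨k, hk, hkc⟩ := RDDReach.exists_iterate_add hc0.le
    (fun u v huv => hc _ ⟨u, v, huv, rfl⟩) hvt
  have hkN : k ≤ N := Nat.le_floor <| (le_div_iff₀ hc0).2 (hkc.trans (RDDReach.le_max hvt))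
  exact ⟨trivial, Set.mem_biUnion hkN hk⟩
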